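/- Let S be an r×n complex matrix, B an n×n complex matrix with BᴴB positive definite, β > 0, d ∈ ℂʳ. Suppose q ∈ ℂⁿ satisfies the ESI normal equation (SᴴS + β BᴴB) q = Sᴴ d, and set δd := d − S q. Then q = (1/β) (BᴴB)⁻¹ Sᴴ δd, and the ESI misfit equals a weighted squared residual: ½‖S q − d‖² + (β/2)‖B q‖² = ½ Re( δdᴴ (I + (1/β) S (BᴴB)⁻¹ Sᴴ) δd ). -/

import Mathlib

open Matrix
open scoped ComplexOrder

/-- Repackage a plain vector as an element of Euclidean space (so that `‖·‖`
is the Euclidean norm). -/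
noncomputable def euclid {m : Type*} [Fintype m] (v : m → ℂ) : EuclideanSpace ℂ m :=
  (WithLp.equiv 2 (m → ℂ)).symm v

lemma norm_euclid_sq {m : Type*} [Fintype m] (v : m → ℂ) :
    ‖euclid v‖ ^ 2 = (star v ⬝ᵥ v).re := by
  rw [euclid, EuclideanSpace.norm_eq, Real.sq_sqrt (by positivity), dotProduct, Complex.re_sum]
  congr 1; ext i
  simp [Pi.star_apply, mul_comm, Complex.mul_conj, Complex.sq_norm]

/-- if `q` solves the ESI normal equation `(SᴴS + β BᴴB) q = Sᴴ d`
and `δd = d − S q`, then `q = (1/β) (BᴴB)⁻¹ Sᴴ δd` and the ESI misfit equals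
the weighted squared residual `½ Re(δdᴴ (I + (1/β) S (BᴴB)⁻¹ Sᴴ) δd)`. -/
theorem esi_is_weighted_fwi {n r : ℕ}
    (S : Matrix (Fin r) (Fin n) ℂ) (B : Matrix (Fin n) (Fin n) ℂ)
    (hB : (Bᴴ * B).PosDef) (β : ℝ) (hβ : 0 < β) (d : Fin r → ℂ)
    (q : Fin n → ℂ)
    (hq : (Sᴴ * S + (β : ℂ) • (Bᴴ * B)) *ᵥ q = Sᴴ *ᵥ d)
    (δd : Fin r → ℂ) (hδd : δd = d - S *ᵥ q) :
    q = (1 / (β : ℂ)) • ((Bᴴ * B)⁻¹ *ᵥ (Sᴴ *ᵥ δd)) ∧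
    (1 / 2 : ℝ) * ‖euclid (S *ᵥ q - d)‖ ^ 2 + (β / 2) * ‖euclid (B *ᵥ q)‖ ^ 2 =
      (1 / 2 : ℝ) *
        (star δd ⬝ᵥ ((1 + (1 / (β : ℂ)) • (S * (Bᴴ * B)⁻¹ * Sᴴ)) *ᵥ δd)).re := by
  have hβ0 : (β : ℂ) ≠ 0 := by exact_mod_cast hβ.ne'
  have hAinv : (Bᴴ * B)⁻¹ * (Bᴴ * B) = 1 :=
    nonsing_inv_mul _ ((isUnit_iff_isUnit_det _).mp hB.isUnit)
  -- key: β • (A *ᵥ q) = Sᴴ *ᵥ δd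
  have key : (β : ℂ) • ((Bᴴ * B) *ᵥ q) = Sᴴ *ᵥ δd := by
    rw [hδd, mulVec_sub, Matrix.mulVec_mulVec]
    rw [add_mulVec, smul_mulVec] at hq
    rw [← hq]; abel
  have h1 : q = (1 / (β : ℂ)) • ((Bᴴ * B)⁻¹ *ᵥ (Sᴴ *ᵥ δd)) := by
    rw [← key, mulVec_smul, Matrix.mulVec_mulVec, hAinv, one_mulVec,
      smul_smul, one_div, inv_mul_cancel₀ hβ0, one_smul]
  refine ⟨h1, ?_⟩
  -- abbreviations
  set M : Matrix (Fin r) (Fin r) ℂ := S * (Bᴴ * B)⁻¹ * Sᴴ with hM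
  have hMherm : Mᴴ = M := by
    simp [hM, conjTranspose_mul, hB.isHermitian.inv.eq, Matrix.mul_assoc]
  have hSq : S *ᵥ q = (1 / (β : ℂ)) • (M *ᵥ δd) := by
    rw [h1, mulVec_smul, Matrix.mulVec_mulVec, Matrix.mulVec_mulVec, hM, Matrix.mul_assoc]
  -- first term
  have e1 : star (S *ᵥ q - d) ⬝ᵥ (S *ᵥ q - d) = star δd ⬝ᵥ δd := by
    have : S *ᵥ q - d = -δd := by rw [hδd]; abel
    rw [this, star_neg, neg_dotProduct, dotProduct_neg, neg_neg]
  -- second term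
  have e2 : star (B *ᵥ q) ⬝ᵥ (B *ᵥ q)
      = (1 / (β : ℂ)) * ((1 / (β : ℂ)) * (star δd ⬝ᵥ (M *ᵥ δd))) := by
    have hABq : (Bᴴ * B) *ᵥ q = (1 / (β : ℂ)) • (Sᴴ *ᵥ δd) := by
      rw [← key, smul_smul, one_div, inv_mul_cancel₀ hβ0, one_smul]
    have hstarc : star (1 / (β : ℂ)) = 1 / (β : ℂ) := by
      simp [Complex.star_def, Complex.conj_ofReal]
    have hsym : star (M *ᵥ δd) ⬝ᵥ δd = star δd ⬝ᵥ (M *ᵥ δd) := by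
      rw [star_mulVec, ← dotProduct_mulVec, hMherm]
    rw [star_mulVec, ← dotProduct_mulVec, Matrix.mulVec_mulVec, hABq, dotProduct_smul,
      dotProduct_mulVec, ← star_mulVec, hSq, star_smul, smul_dotProduct, hstarc, hsym,
      smul_eq_mul, smul_eq_mul]
  -- RHS expansion
  have e3 : star δd ⬝ᵥ ((1 + (1 / (β : ℂ)) • M) *ᵥ δd)
      = star δd ⬝ᵥ δd + (1 / (β : ℂ)) * (star δd ⬝ᵥ (M *ᵥ δd)) := by
    rw [add_mulVec, one_mulVec, smul_mulVec, dotProduct_add, dotProduct_smul,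
      smul_eq_mul]
  rw [norm_euclid_sq, norm_euclid_sq, e1, e2, e3, Complex.add_re]
  have hc : (1 / (β : ℂ)) = ((1 / β : ℝ) : ℂ) := by push_cast; ring
  rw [hc, Complex.re_ofReal_mul, Complex.re_ofReal_mul]
  field_simp
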